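/- In the discrete setting, the Barron-1 norm equals the Barron-∞ norm: for any finite collection of coefficients a_k with probability weights π_k, inf over equivalent representations of Σ_k π_k|a_k| equals inf over equivalent representations of max_k |a_k|, where representations (a, π) are equivalent if the weighted sums a_k π_k agree componentwise. Concretely: given c ∈ ℝ^m, the infimum of max_k |a_k| over all (a, π) with π a probability vector and a_k π_k = c_k for all k, equals Σ_k |c_k|. -/

import Mathlib

/-!
Writing `M` for the largest `|a k|` on the support of `π`, every representation satisfies
`∑ |c k| = ∑ |a k| π k ≤ M ∑ π k = M`. Conversely, with `T = ∑ |c k|`, the representation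
`π k = |c k| / T`, `a k = T c k / |c k|` has `|a k| = T` on its whole support, so the bound is attained.
-/

open Finset

variable {ι : Type*}

noncomputable def maxAbsOnSupport (a π : ι → ℝ) : ℝ :=
  sSup {r : ℝ | ∃ k, 0 < π k ∧ r = |a k|}

lemma abs_le_maxAbsOnSupport [Finite ι] (a : ι → ℝ) {π : ι → ℝ} {k : ι} (hk : 0 < π k) :
    |a k| ≤ maxAbsOnSupport a π := by
  have hbdd : BddAbove {r : ℝ | ∃ k, 0 < π k ∧ r = |a k|} :=
    (Set.finite_range fun k => |a k|).bddAbove.mono fun _ ⟨k, _, hr⟩ => Set.mem_range.mpr ⟨k, hr.symm⟩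
  exact le_csSup hbdd ⟨k, hk, rfl⟩

lemma maxAbsOnSupport_eq_of_forall_pos {a π : ι → ℝ} {t : ℝ} (hne : ∃ k, 0 < π k)
    (ht : ∀ k, 0 < π k → |a k| = t) : maxAbsOnSupport a π = t := by
  have hset : {r : ℝ | ∃ k, 0 < π k ∧ r = |a k|} = {t} := by
    ext r
    constructor
    · rintro ⟨k, hk, rfl⟩
      exact ht k hk
    · rintro rfl
      obtain ⟨k, hk⟩ := hne
      exact ⟨k, hk, (ht k hk).symm⟩
  rw [maxAbsOnSupport, hset, csSup_singleton]

lemma sum_abs_mul_le_maxAbsOnSupport [Fintype ι] {a π : ι → ℝ} (hπ : ∀ k, 0 ≤ π k) (hπ1 : ∑ k, π k = 1) :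
    ∑ k, |a k * π k| ≤ maxAbsOnSupport a π := by
  have hterm : ∀ k, |a k * π k| ≤ maxAbsOnSupport a π * π k := by
    intro k
    rw [abs_mul, abs_of_nonneg (hπ k)]
    rcases (hπ k).eq_or_lt with h | h
    · simp [← h]
    · exact mul_le_mul_of_nonneg_right (abs_le_maxAbsOnSupport a h) (hπ k)
  calc ∑ k, |a k * π k| ≤ ∑ k, maxAbsOnSupport a π * π k := sum_le_sum fun k _ => hterm k
    _ = maxAbsOnSupport a π := by rw [← mul_sum, hπ1, mul_one]

lemma exists_representation_maxAbsOnSupport_eq_sum_abs [Fintype ι] {c : ι → ℝ} (hc : c ≠ 0) :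
    ∃ a π : ι → ℝ, (∀ k, 0 ≤ π k) ∧ (∑ k, π k = 1) ∧ (∀ k, a k * π k = c k) ∧
      maxAbsOnSupport a π = ∑ k, |c k| := by
  set T := ∑ k, |c k|
  obtain ⟨k₀, hk₀⟩ : ∃ k, c k ≠ 0 := Function.ne_iff.mp hc
  have hT : 0 < T := sum_pos' (fun k _ => abs_nonneg _) ⟨k₀, mem_univ _, abs_pos.mpr hk₀⟩
  refine ⟨fun k => T * c k / |c k|, fun k => |c k| / T, fun k => by positivity, ?_, ?_, ?_⟩
  · rw [← sum_div, div_self hT.ne']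
  · intro k
    rcases eq_or_ne (c k) 0 with h | h
    · simp [h]
    · field_simp
  · refine maxAbsOnSupport_eq_of_forall_pos ⟨k₀, by positivity⟩ fun k hk => ?_
    have hck : |c k| ≠ 0 := fun h => by simp [h] at hk
    rw [abs_div, abs_mul, abs_abs, abs_of_pos hT, mul_div_cancel_right₀ _ hck]

theorem barron_one_eq_barron_infty (m : ℕ) (c : Fin m → ℝ) (hc : c ≠ 0) :
    sInf {t : ℝ | ∃ a π : Fin m → ℝ,
        (∀ k, 0 ≤ π k) ∧ (∑ k, π k = 1) ∧ (∀ k, a k * π k = c k) ∧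
        t = sSup {r : ℝ | ∃ k, 0 < π k ∧ r = |a k|}} = ∑ k, |c k| := by
  refine IsLeast.csInf_eq ⟨?_, ?_⟩
  · obtain ⟨a, π, hπ, hπ1, hac, hmax⟩ := exists_representation_maxAbsOnSupport_eq_sum_abs hc
    exact ⟨a, π, hπ, hπ1, hac, hmax.symm⟩
  · rintro t ⟨a, π, hπ, hπ1, hac, rfl⟩
    have hle := sum_abs_mul_le_maxAbsOnSupport (a := a) hπ hπ1
    simp only [hac] at hle
    exact hle
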